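/- Let W be a condensed wall with special vertices a, b and bottleneck vertices z_0, …, z_r. In W − {a, b} the following configurations do not exist: (1) a ladder L with 5 rungs together with a path, internally disjoint from L, joining an endvertex v_1 of an end-rung of L to a vertex v_2, such that the branch vertex corresponding to v_1 or to v_2 is a bottleneck vertex; (2) a ladder L with 4 rungs together with two disjoint paths, internally disjoint from L, one joining an endvertex v_1 of one end-rung of L (continuing one stringer) to a vertex v_2 and the other joining the endvertex v_3 on the other stringer of the opposite end-rung of L to a vertex v_4, such that one of v_1, v_2 and one of v_3, v_4 is a bottleneck vertex; (3) a ladder L with 3 rungs together with two disjoint paths, internally disjoint from L, joining the two endvertices v_1, v_3 of the same end-rung of L to vertices v_2 and v_4 respectively, such that one of v_1, v_2 and one of v_3, v_4 is a bottleneck vertex. -/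

import Mathlib

open SimpleGraph

/-- The elementary ladder with `n` rungs: vertices `(i, s)` for `i < n`, `s : Bool`;
the two stringers are the paths `(0,s), (1,s), …, (n-1,s)` and the rungs are the
edges between `(i, false)` and `(i, true)`. -/
def elemLadder (n : ℕ) : SimpleGraph (Fin n × Bool) :=
  SimpleGraph.fromRel (fun x y =>
    (x.2 = y.2 ∧ (y.1 : ℕ) = (x.1 : ℕ) + 1) ∨ (x.1 = y.1 ∧ x.2 ≠ y.2))

/-- A subdivision copy of the graph `H` inside the graph `G`:  an injective choice of
branch vertices together with, for every edge of `H`, a path of `G` between the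
corresponding branch vertices, such that distinct edge-paths meet only in common
branch endvertices and no branch vertex lies in the interior of an edge-path. -/
structure SubdivCopy {U V : Type} (H : SimpleGraph U) (G : SimpleGraph V) where
  branch : U → V
  branch_inj : Function.Injective branch
  walk : ∀ ⦃a b : U⦄, H.Adj a b → G.Walk (branch a) (branch b)
  walk_isPath : ∀ ⦃a b : U⦄ (h : H.Adj a b), (walk h).IsPath
  walk_symm : ∀ ⦃a b : U⦄ (h : H.Adj a b), walk h.symm = (walk h).reverse
  walk_disj : ∀ ⦃a b a' b' : U⦄ (h : H.Adj a b) (h' : H.Adj a' b'), s(a, b) ≠ s(a', b') →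
    ∀ x, x ∈ (walk h).support → x ∈ (walk h').support →
      (x = branch a ∨ x = branch b) ∧ (x = branch a' ∨ x = branch b')
  branch_not_interior : ∀ ⦃a b : U⦄ (h : H.Adj a b) (c : U),
    branch c ∈ (walk h).support → c = a ∨ c = b

/-- The vertex set of a subdivision copy. -/
def SubdivCopy.verts {U V : Type} {H : SimpleGraph U} {G : SimpleGraph V}
    (S : SubdivCopy H G) : Set V :=
  Set.range S.branch ∪ {x | ∃ (a b : U) (h : H.Adj a b), x ∈ (S.walk h).support}

/-- The edge set of a subdivision copy. -/
def SubdivCopy.edges {U V : Type} {H : SimpleGraph U} {G : SimpleGraph V}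
    (S : SubdivCopy H G) : Set (Sym2 V) :=
  {e | ∃ (a b : U) (h : H.Adj a b), e ∈ (S.walk h).edges}

/-- `H` is a minor of `G`: there are nonempty, pairwise disjoint, connected branch
sets in `G`, one for each vertex of `H`, with an edge of `G` between the branch sets
of any two adjacent vertices of `H`. -/
def IsMinor {U V : Type} (H : SimpleGraph U) (G : SimpleGraph V) : Prop :=
  ∃ f : U → Set V,
    (∀ u, (f u).Nonempty) ∧
    (∀ u, (G.induce (f u)).Connected) ∧
    (∀ u u', u ≠ u' → Disjoint (f u) (f u')) ∧
    (∀ u u', H.Adj u u' → ∃ x ∈ f u, ∃ y ∈ f u', G.Adj x y)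

/-- The vertex type of a condensed wall of size `r`: the path vertices `u^j_k`
(`j` indexes the `r` horizontal paths, `k` the `2r` positions, both 0-indexed),
the bottleneck vertices `z_0, …, z_r`, and the two special vertices `a`, `b`. -/
def CWVert (r : ℕ) : Type := (Fin r × Fin (2 * r)) ⊕ (Fin (r + 1) ⊕ Bool)

/-- The path vertex `u^{j+1}_{k+1}` (so `j`, `k` are 0-indexed). -/
def cwU {r : ℕ} (j : Fin r) (k : Fin (2 * r)) : CWVert r := Sum.inl (j, k)

/-- The bottleneck vertex `z_i`. -/
def cwZ {r : ℕ} (i : Fin (r + 1)) : CWVert r := Sum.inr (Sum.inl i)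

/-- The special vertex `a` of the condensed wall. -/
def cwA (r : ℕ) : CWVert r := Sum.inr (Sum.inr false)

/-- The special vertex `b` of the condensed wall. -/
def cwB (r : ℕ) : CWVert r := Sum.inr (Sum.inr true)

/-- The vertex `c = z_0` of the condensed wall. -/
def cwC (r : ℕ) : CWVert r := cwZ (0 : Fin (r + 1))

/-- The vertex `d = z_r` of the condensed wall. -/
def cwD (r : ℕ) : CWVert r := cwZ (Fin.last r)

/-- The condensed wall of size `r`: for each `j ∈ [r]` a path `u^j_1 … u^j_{2r}`,
with `z_{j-1}` joined to the odd-position vertices and `z_j` to the even-position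
vertices of that path, consecutive `z`'s joined by an edge, `a` joined to all
`u^j_1` and `b` joined to all `u^j_{2r}`. -/
def condensedWall (r : ℕ) : SimpleGraph (CWVert r) :=
  SimpleGraph.fromRel (fun x y =>
    match x, y with
    | Sum.inl (j, k), Sum.inl (j', k') => j = j' ∧ (k' : ℕ) = (k : ℕ) + 1
    | Sum.inr (Sum.inl i), Sum.inr (Sum.inl i') => (i' : ℕ) = (i : ℕ) + 1
    | Sum.inr (Sum.inl i), Sum.inl (j, k) =>
        ((i : ℕ) = (j : ℕ) ∧ (k : ℕ) % 2 = 0) ∨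
        ((i : ℕ) = (j : ℕ) + 1 ∧ (k : ℕ) % 2 = 1)
    | Sum.inr (Sum.inr false), Sum.inl (_, k) => (k : ℕ) = 0
    | Sum.inr (Sum.inr true), Sum.inl (_, k) => (k : ℕ) + 1 = 2 * r
    | _, _ => False)

/-- A vertex of the condensed wall is a bottleneck vertex if it is one of the `z_i`. -/
def IsBottleneck {r : ℕ} (x : CWVert r) : Prop := ∃ i : Fin (r + 1), x = cwZ i

/-- The vertex set of the `j`-th layer of the condensed wall of size `r`
(0-indexed `j`): the vertices `u^j_1, …, u^j_{2r}` together with `z_{j-1}` and `z_j`. -/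
def layerVerts (r : ℕ) (j : Fin r) : Set (CWVert r) :=
  {x | (∃ k, x = cwU j k) ∨ x = cwZ j.castSucc ∨ x = cwZ j.succ}

/-- An X-wing in a graph `G` with designated vertices `a`, `b`, `c`, `d`: a ladder with
three rungs, two disjoint paths joining the endvertices of its first rung to `a` and
to `b`, and two further disjoint paths joining the endvertices of its last rung to `c`
and to `d`, all four paths internally disjoint from each other and from the ladder. -/
structure XWing {V : Type} (G : SimpleGraph V) (a b c d : V) where
  L : SubdivCopy (elemLadder 3) G
  Pa : G.Walk (L.branch (0, false)) a
  Pb : G.Walk (L.branch (0, true)) b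
  Pc : G.Walk (L.branch (2, false)) c
  Pd : G.Walk (L.branch (2, true)) d
  Pa_isPath : Pa.IsPath
  Pb_isPath : Pb.IsPath
  Pc_isPath : Pc.IsPath
  Pd_isPath : Pd.IsPath
  disj_ab : ∀ x, x ∈ Pa.support → x ∉ Pb.support
  disj_ac : ∀ x, x ∈ Pa.support → x ∉ Pc.support
  disj_ad : ∀ x, x ∈ Pa.support → x ∉ Pd.support
  disj_bc : ∀ x, x ∈ Pb.support → x ∉ Pc.support
  disj_bd : ∀ x, x ∈ Pb.support → x ∉ Pd.support
  disj_cd : ∀ x, x ∈ Pc.support → x ∉ Pd.support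
  Pa_L : ∀ x ∈ Pa.support, x ∈ L.verts → x = L.branch (0, false)
  Pb_L : ∀ x ∈ Pb.support, x ∈ L.verts → x = L.branch (0, true)
  Pc_L : ∀ x ∈ Pc.support, x ∈ L.verts → x = L.branch (2, false)
  Pd_L : ∀ x ∈ Pd.support, x ∈ L.verts → x = L.branch (2, true)

/-- The vertex set of an X-wing. -/
def XWing.wverts {V : Type} {G : SimpleGraph V} {a b c d : V} (X : XWing G a b c d) :
    Set V :=
  X.L.verts ∪ {x | x ∈ X.Pa.support} ∪ {x | x ∈ X.Pb.support} ∪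
    {x | x ∈ X.Pc.support} ∪ {x | x ∈ X.Pd.support}

/-- The edge set of an X-wing. -/
def XWing.wedges {V : Type} {G : SimpleGraph V} {a b c d : V} (X : XWing G a b c d) :
    Set (Sym2 V) :=
  X.L.edges ∪ {e | e ∈ X.Pa.edges} ∪ {e | e ∈ X.Pb.edges} ∪
    {e | e ∈ X.Pc.edges} ∪ {e | e ∈ X.Pd.edges}

/-- The vertex set of the condensed wall of size `r` without `a` and `b`. -/
def WMVert (r : ℕ) : Type := {x : CWVert r // x ≠ cwA r ∧ x ≠ cwB r}

/-- The condensed wall of size `r` with the two vertices `a` and `b` deleted. -/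
def wallMinusAB (r : ℕ) : SimpleGraph (WMVert r) :=
  (condensedWall r).induce {x | x ≠ cwA r ∧ x ≠ cwB r}

/-!
Put `z_i` at height `i` and the path `u^j_·` in the strip between heights `j` and `j + 1`
(0-indexed). Then every `z_m` is a cut vertex: the vertices up to height `m` and those from
height `m` on form a separation of `W − {a, b}` with separator `{z_m}`. A subdivided 4-cycle
meets a separator of size one at most once, so it lies on one side of every such cut, that is,
inside one layer. Consecutive squares of a ladder share a rung, so a whole ladder lies in one
layer `j`. Cutting the path of layer `j` at one of its vertices shows in the same way that
a square cannot avoid the bottleneck vertices, and a path from a corner of the ladder to or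
from a bottleneck vertex picks up a bottleneck vertex of layer `j`, since it can only leave
the layer through `z_j` or `z_{j+1}`. Each configuration thus yields three distinct bottleneck
vertices of layer `j`, which has only two: one on the attached path and one on each of two
disjoint squares avoiding its corner, or one on each of two disjoint attached paths and one on
a square avoiding their corners.
-/

namespace SimpleGraph

variable {V : Type*} {G : SimpleGraph V} {A B : Set V}

structure IsSeparation (G : SimpleGraph V) (A B : Set V) : Prop where
  mem_or_mem : ∀ x, x ∈ A ∨ x ∈ B
  adj : ∀ ⦃x y⦄, G.Adj x y → x ∈ A ∧ y ∈ A ∨ x ∈ B ∧ y ∈ B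

theorem IsSeparation.symm (h : G.IsSeparation A B) : G.IsSeparation B A :=
  ⟨fun x => (h.mem_or_mem x).symm, fun _ _ hxy => (h.adj hxy).symm⟩

namespace Walk

theorem exists_mem_inter_of_separation
    (hG : ∀ ⦃x y⦄, G.Adj x y → x ∈ A ∧ y ∈ A ∨ x ∈ B ∧ y ∈ B) :
    ∀ {u v : V} (W : G.Walk u v), u ∈ A → v ∉ A → ∃ x ∈ W.support, x ∈ A ∧ x ∈ B
  | _, _, nil, hu, hv => absurd hu hv
  | _, _, cons h W, hu, hv => by
    rcases hG h with ⟨-, hw⟩ | ⟨hu', -⟩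
    · obtain ⟨x, hx, hxAB⟩ := exists_mem_inter_of_separation hG W hw hv
      exact ⟨x, List.mem_cons_of_mem _ hx, hxAB⟩
    · exact ⟨_, (W.cons h).start_mem_support, hu, hu'⟩

/-- A path can leave `A` and come back only by passing twice through `A ∩ B`. -/
theorem IsPath.support_subset_of_separation
    (hG : ∀ ⦃x y⦄, G.Adj x y → x ∈ A ∧ y ∈ A ∨ x ∈ B ∧ y ∈ B) {u v : V} {W : G.Walk u v}
    (hW : W.IsPath) (hu : u ∈ A) (hv : v ∈ A)
    (hAB : (A ∩ B ∩ {x | x ∈ W.support}).Subsingleton) : ∀ x ∈ W.support, x ∈ A := by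
  induction W with
  | nil => simpa using hu
  | @cons u w v h W ih =>
    rw [cons_isPath_iff] at hW
    rcases hG h with ⟨-, hw⟩ | ⟨huB, hwB⟩
    · intro x hx
      rcases List.mem_cons.mp hx with rfl | hx
      · exact hu
      · exact ih hW.1 hw hv (hAB.anti fun y ⟨hy, hyW⟩ => ⟨hy, List.mem_cons_of_mem _ hyW⟩) x hx
    · exfalso
      obtain ⟨y, hyW, hyAB⟩ : ∃ y ∈ W.support, y ∈ A ∧ y ∈ B := by
        by_cases hvB : v ∈ B
        · exact ⟨v, W.end_mem_support, hv, hvB⟩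
        · obtain ⟨y, hyW, hyB, hyA⟩ :=
            exists_mem_inter_of_separation (fun _ _ h => (hG h).symm) W hwB hvB
          exact ⟨y, hyW, hyA, hyB⟩
      obtain rfl : u = y := hAB ⟨⟨hu, huB⟩, (cons h W).start_mem_support⟩
        ⟨hyAB, List.mem_cons_of_mem _ hyW⟩
      exact hW.2 hyW

/-- If the ends lay on opposite strict sides, both paths would cross the separator, at the
same vertex, which would then be shared by the two paths away from their ends. -/
theorem support_subset_or_of_internallyDisjoint (hs : G.IsSeparation A B) {p q : V}
    {W₁ W₂ : G.Walk p q} (h₁ : W₁.IsPath) (h₂ : W₂.IsPath)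
    (hdisj : ∀ x ∈ W₁.support, x ∈ W₂.support → x = p ∨ x = q)
    (hAB : (A ∩ B ∩ {x | x ∈ W₁.support ∨ x ∈ W₂.support}).Subsingleton) :
    {x | x ∈ W₁.support ∨ x ∈ W₂.support} ⊆ A ∨ {x | x ∈ W₁.support ∨ x ∈ W₂.support} ⊆ B := by
  have side : ∀ {A B : Set V}, G.IsSeparation A B →
      (A ∩ B ∩ {x | x ∈ W₁.support ∨ x ∈ W₂.support}).Subsingleton → p ∈ A → q ∈ A →
      {x | x ∈ W₁.support ∨ x ∈ W₂.support} ⊆ A := fun hs hAB hp hq x hx =>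
    hx.elim
      (h₁.support_subset_of_separation hs.adj hp hq
        (hAB.anti fun _ ⟨h, hy⟩ => ⟨h, Or.inl hy⟩) x)
      (h₂.support_subset_of_separation hs.adj hp hq
        (hAB.anti fun _ ⟨h, hy⟩ => ⟨h, Or.inr hy⟩) x)
  have cross : ∀ {A B : Set V}, G.IsSeparation A B →
      (A ∩ B ∩ {x | x ∈ W₁.support ∨ x ∈ W₂.support}).Subsingleton → p ∈ A → p ∉ B → q ∉ A →
      False := by
    intro A B hs hAB hp hpB hq
    obtain ⟨x₁, hx₁, hx₁AB⟩ := exists_mem_inter_of_separation hs.adj W₁ hp hq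
    obtain ⟨x₂, hx₂, hx₂AB⟩ := exists_mem_inter_of_separation hs.adj W₂ hp hq
    obtain rfl : x₁ = x₂ := hAB ⟨hx₁AB, Or.inl hx₁⟩ ⟨hx₂AB, Or.inr hx₂⟩
    rcases hdisj x₁ hx₁ hx₂ with rfl | rfl
    exacts [hpB hx₁AB.2, hq hx₁AB.1]
  have hBA : (B ∩ A ∩ {x | x ∈ W₁.support ∨ x ∈ W₂.support}).Subsingleton := by
    rwa [Set.inter_comm B]
  by_cases hA : p ∈ A ∧ q ∈ A
  · exact Or.inl (side hs hAB hA.1 hA.2)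
  by_cases hB : p ∈ B ∧ q ∈ B
  · exact Or.inr (side hs.symm hBA hB.1 hB.2)
  exfalso
  rcases hs.mem_or_mem p with hp | hp
  · have hq : q ∉ A := fun hq => hA ⟨hp, hq⟩
    exact cross hs hAB hp (fun hpB => hB ⟨hpB, (hs.mem_or_mem q).resolve_left hq⟩) hq
  · have hq : q ∉ B := fun hq => hB ⟨hp, hq⟩
    exact cross hs.symm hBA hp (fun hpA => hA ⟨hpA, (hs.mem_or_mem q).resolve_right hq⟩) hq

end Walk

end SimpleGraph

namespace SubdivCopy

section General

variable {U U' U'' V : Type} {H : SimpleGraph U} {H' : SimpleGraph U'} {H'' : SimpleGraph U''}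
  {G : SimpleGraph V} (S : SubdivCopy H G)

theorem branch_mem_verts (c : U) : S.branch c ∈ S.verts := Or.inl ⟨c, rfl⟩

theorem mem_support_walk_symm {a b : U} (h : H.Adj a b) {x : V} :
    x ∈ (S.walk h.symm).support ↔ x ∈ (S.walk h).support := by
  rw [S.walk_symm, Walk.support_reverse, List.mem_reverse]

theorem exists_eq_branch_of_mem_walk {a b a' b' : U} (h : H.Adj a b) (h' : H.Adj a' b')
    (hne : s(a, b) ≠ s(a', b')) {x : V} (hx : x ∈ (S.walk h).support)
    (hx' : x ∈ (S.walk h').support) :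
    ∃ c, x = S.branch c ∧ (c = a ∨ c = b) ∧ (c = a' ∨ c = b') := by
  rcases (S.walk_disj h h' hne x hx hx').1 with rfl | rfl
  · exact ⟨a, rfl, .inl rfl, S.branch_not_interior h' a hx'⟩
  · exact ⟨b, rfl, .inr rfl, S.branch_not_interior h' b hx'⟩

theorem isPath_walk_append {a b c : U} (hab : H.Adj a b) (hbc : H.Adj b c) (hac : a ≠ c) :
    ((S.walk hab).append (S.walk hbc)).IsPath := by
  have hq := (S.walk_isPath hbc).support_nodup
  rw [← Walk.cons_tail_support, List.nodup_cons] at hq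
  rw [Walk.isPath_def, Walk.support_append, List.nodup_append]
  refine ⟨(S.walk_isPath hab).support_nodup, hq.2, ?_⟩
  rintro x hx _ hx' rfl
  have hne : s(a, b) ≠ s(b, c) := by simp [hac, hab.ne]
  obtain ⟨d, rfl, hd, hd'⟩ :=
    S.exists_eq_branch_of_mem_walk hab hbc hne hx (List.mem_of_mem_tail hx')
  obtain rfl : d = b := by
    rcases hd with rfl | rfl
    · rcases hd' with h | h
      exacts [absurd h hab.ne, absurd h hac]
    · rfl
  exact hq.1 hx'

def comp (f : H' ↪g H) : SubdivCopy H' G where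
  branch := S.branch ∘ f
  branch_inj := S.branch_inj.comp f.injective
  walk _ _ h := S.walk (f.map_adj_iff.2 h)
  walk_isPath _ _ _ := S.walk_isPath _
  walk_symm _ _ _ := S.walk_symm _
  walk_disj _ _ _ _ _ _ hne :=
    S.walk_disj _ _ fun h => hne (Sym2.map.injective f.injective (by simpa using h))
  branch_not_interior _ _ _ c hc :=
    (S.branch_not_interior _ (f c) hc).imp (fun h => f.injective h) fun h => f.injective h

theorem comp_verts_subset (f : H' ↪g H) : (S.comp f).verts ⊆ S.verts := by
  rintro x (⟨c, rfl⟩ | ⟨a, b, h, hx⟩)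
  exacts [S.branch_mem_verts (f c), Or.inr ⟨f a, f b, _, hx⟩]

theorem mem_range_of_branch_mem_comp_verts (f : H' ↪g H) {c : U}
    (hc : S.branch c ∈ (S.comp f).verts) : c ∈ Set.range f := by
  rcases hc with ⟨c', hc'⟩ | ⟨a, b, h, hc⟩
  · exact ⟨c', S.branch_inj hc'⟩
  · rcases S.branch_not_interior _ c hc with rfl | rfl
    exacts [⟨a, rfl⟩, ⟨b, rfl⟩]

theorem disjoint_comp_verts {f : H' ↪g H} {g : H'' ↪g H}
    (hfg : Disjoint (Set.range f) (Set.range g)) : Disjoint (S.comp f).verts (S.comp g).verts := by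
  rw [Set.disjoint_left]
  intro x hf hg
  obtain ⟨c, rfl⟩ : ∃ c, x = S.branch c := by
    rcases hf with ⟨c, rfl⟩ | ⟨a, b, h, hxf⟩
    · exact ⟨_, rfl⟩
    rcases hg with ⟨c, rfl⟩ | ⟨a', b', h', hxg⟩
    · exact ⟨_, rfl⟩
    have hne : s(f a, f b) ≠ s(g a', g b') := by
      rw [Ne, Sym2.eq_iff]
      rintro (⟨he, -⟩ | ⟨he, -⟩)
      exacts [Set.disjoint_left.mp hfg ⟨a, rfl⟩ ⟨a', he.symm⟩,
        Set.disjoint_left.mp hfg ⟨a, rfl⟩ ⟨b', he.symm⟩]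
    obtain ⟨c, rfl, -⟩ := S.exists_eq_branch_of_mem_walk _ _ hne hxf hxg
    exact ⟨c, rfl⟩
  exact Set.disjoint_left.mp hfg (S.mem_range_of_branch_mem_comp_verts f hf)
    (S.mem_range_of_branch_mem_comp_verts g hg)

end General

section Square

variable {V : Type} {G : SimpleGraph V} (S : SubdivCopy (elemLadder 2) G)

def route₁ : G.Walk (S.branch (0, false)) (S.branch (1, true)) :=
  (S.walk (a := (0, false)) (b := (0, true)) (by simp [elemLadder])).append
    (S.walk (a := (0, true)) (b := (1, true)) (by simp [elemLadder]))

def route₂ : G.Walk (S.branch (0, false)) (S.branch (1, true)) :=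
  (S.walk (a := (0, false)) (b := (1, false)) (by simp [elemLadder])).append
    (S.walk (a := (1, false)) (b := (1, true)) (by simp [elemLadder]))

theorem isPath_route₁ : S.route₁.IsPath := S.isPath_walk_append _ _ (by decide)

theorem isPath_route₂ : S.route₂.IsPath := S.isPath_walk_append _ _ (by decide)

theorem eq_or_eq_of_mem_route₁_of_mem_route₂ {x : V} (h₁ : x ∈ S.route₁.support)
    (h₂ : x ∈ S.route₂.support) : x = S.branch (0, false) ∨ x = S.branch (1, true) := by
  rw [route₁, Walk.mem_support_append_iff] at h₁
  rw [route₂, Walk.mem_support_append_iff] at h₂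
  rcases h₁ with h₁ | h₁ <;> rcases h₂ with h₂ | h₂ <;>
  · obtain ⟨c, rfl, hc, hc'⟩ := S.exists_eq_branch_of_mem_walk _ _ (by decide) h₁ h₂
    rcases hc with rfl | rfl <;> rcases hc' with h | h <;> simp_all

theorem verts_eq_routes : S.verts = {x | x ∈ S.route₁.support ∨ x ∈ S.route₂.support} := by
  ext x
  simp only [verts, route₁, route₂, Set.mem_union, Set.mem_range, Set.mem_ofPred_eq,
    Walk.mem_support_append_iff]
  constructor
  · rintro (⟨c, rfl⟩ | ⟨c, d, h, hx⟩)
    · fin_cases c <;> simp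
    · have hx' := (S.mem_support_walk_symm h).2 hx
      fin_cases c <;> fin_cases d <;> simp [elemLadder] at h <;> simp [hx, hx']
  · rintro ((h | h) | (h | h)) <;> exact Or.inr ⟨_, _, _, h⟩

theorem verts_subset_or_subset {A B : Set V} (hs : G.IsSeparation A B)
    (hAB : (A ∩ B ∩ S.verts).Subsingleton) : S.verts ⊆ A ∨ S.verts ⊆ B := by
  rw [S.verts_eq_routes] at hAB ⊢
  exact Walk.support_subset_or_of_internallyDisjoint hs S.isPath_route₁ S.isPath_route₂
    (fun _ h₁ h₂ => S.eq_or_eq_of_mem_route₁_of_mem_route₂ h₁ h₂) hAB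

end Square

end SubdivCopy

def elemLadder.squareEmb {n : ℕ} (a : ℕ) (ha : a + 1 < n) : elemLadder 2 ↪g elemLadder n where
  toFun c := (⟨a + c.1, by omega⟩, c.2)
  inj' := by
    rintro ⟨i, s⟩ ⟨i', s'⟩ h
    simp only [Prod.mk.injEq, Fin.ext_iff, Nat.add_left_cancel_iff] at h ⊢
    exact h
  map_rel_iff' := by
    rintro ⟨i, s⟩ ⟨i', s'⟩
    change (elemLadder n).Adj (⟨a + i, _⟩, s) (⟨a + i', _⟩, s') ↔ _
    simp [elemLadder, Fin.ext_iff, add_assoc]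

@[simp] theorem elemLadder.squareEmb_apply {n : ℕ} (a : ℕ) (ha : a + 1 < n) (c : Fin 2 × Bool) :
    elemLadder.squareEmb a ha c = (⟨a + c.1, by omega⟩, c.2) := rfl

namespace SubdivCopy

variable {V : Type} {G : SimpleGraph V} {n : ℕ} (L : SubdivCopy (elemLadder n) G)

def square (a : ℕ) (ha : a + 1 < n) : SubdivCopy (elemLadder 2) G :=
  L.comp (elemLadder.squareEmb a ha)

theorem branch_mem_square_verts {a : ℕ} (ha : a + 1 < n) {c : Fin n × Bool}
    (hc : (c.1 : ℕ) = a ∨ (c.1 : ℕ) = a + 1) : L.branch c ∈ (L.square a ha).verts := by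
  obtain ⟨⟨i, hi⟩, s⟩ := c
  rcases hc with rfl | rfl
  exacts [(L.square i ha).branch_mem_verts (0, s), (L.square a ha).branch_mem_verts (1, s)]

theorem notMem_square_verts {a : ℕ} (ha : a + 1 < n) {c : Fin n × Bool}
    (hc : (c.1 : ℕ) ≠ a ∧ (c.1 : ℕ) ≠ a + 1) {x : V} (hx : x ∈ L.verts → x = L.branch c) :
    x ∉ (L.square a ha).verts := by
  intro hsq
  obtain rfl := hx (L.comp_verts_subset _ hsq)
  obtain ⟨⟨i, s⟩, hc'⟩ := L.mem_range_of_branch_mem_comp_verts _ hsq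
  have := congrArg (fun c : Fin n × Bool => (c.1 : ℕ)) hc'
  simp only [elemLadder.squareEmb_apply] at this
  omega

theorem disjoint_square_verts {a a' : ℕ} (ha : a + 1 < n) (ha' : a' + 1 < n) (h : a + 1 < a') :
    Disjoint (L.square a ha).verts (L.square a' ha').verts := by
  refine L.disjoint_comp_verts (Set.disjoint_left.mpr ?_)
  rintro _ ⟨⟨i, s⟩, rfl⟩ ⟨⟨i', s'⟩, hc'⟩
  have := congrArg (fun c : Fin n × Bool => (c.1 : ℕ)) hc'
  simp only [elemLadder.squareEmb_apply] at this
  omega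

end SubdivCopy

namespace CWVert

variable {r : ℕ}

/-- With `z_i` at height `i` and `u^j_·` spanning the heights `j` to `j + 1`, `lo` and `hi` are
the lowest and the highest height of a vertex; the values at `a` and `b` play no role. -/
def lo : CWVert r → ℕ
  | Sum.inl (j, _) => j
  | Sum.inr (Sum.inl i) => i
  | Sum.inr (Sum.inr _) => 0

def hi : CWVert r → ℕ
  | Sum.inl (j, _) => j + 1
  | Sum.inr (Sum.inl i) => i
  | Sum.inr (Sum.inr _) => 0

theorem cases (x : CWVert r) :
    (∃ j k, x = cwU j k) ∨ (∃ i, x = cwZ i) ∨ x = cwA r ∨ x = cwB r := by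
  rcases x with ⟨j, k⟩ | i | _ | _
  exacts [.inl ⟨j, k, rfl⟩, .inr (.inl ⟨i, rfl⟩), .inr (.inr (.inl rfl)), .inr (.inr (.inr rfl))]

@[simp] theorem lo_cwU (j : Fin r) (k : Fin (2 * r)) : (cwU j k).lo = j := rfl
@[simp] theorem hi_cwU (j : Fin r) (k : Fin (2 * r)) : (cwU j k).hi = j + 1 := rfl
@[simp] theorem lo_cwZ (i : Fin (r + 1)) : (cwZ i).lo = i := rfl
@[simp] theorem hi_cwZ (i : Fin (r + 1)) : (cwZ i).hi = i := rfl

@[simp] theorem cwU_inj {j j' : Fin r} {k k' : Fin (2 * r)} :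
    cwU j k = cwU j' k' ↔ j = j' ∧ k = k' :=
  ⟨fun h => Prod.ext_iff.mp (Sum.inl.inj h), fun ⟨hj, hk⟩ => hj ▸ hk ▸ rfl⟩

@[simp] theorem cwZ_inj {i i' : Fin (r + 1)} : cwZ i = (cwZ i' : CWVert r) ↔ i = i' :=
  ⟨fun h => Sum.inl.inj (Sum.inr.inj h), fun h => h ▸ rfl⟩

@[simp] theorem cwU_ne_cwZ (j : Fin r) (k : Fin (2 * r)) (i : Fin (r + 1)) : cwU j k ≠ cwZ i :=
  Sum.inl_ne_inr

@[simp] theorem cwZ_ne_cwU (j : Fin r) (k : Fin (2 * r)) (i : Fin (r + 1)) : cwZ i ≠ cwU j k :=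
  Sum.inr_ne_inl

end CWVert

namespace WMVert

variable {r : ℕ}

theorem cases (v : WMVert r) : (∃ j k, v.val = cwU j k) ∨ ∃ i, v.val = cwZ i := by
  rcases v.val.cases with h | h | h | h
  exacts [.inl h, .inr h, absurd h v.prop.1, absurd h v.prop.2]

theorem hi_le (v : WMVert r) : v.val.hi ≤ r := by
  rcases v.cases with ⟨j, k, hv⟩ | ⟨i, hv⟩ <;> simp only [hv, CWVert.hi_cwU, CWVert.hi_cwZ] <;>
    omega

theorem isSeparation_levelCut (m : ℕ) :
    (wallMinusAB r).IsSeparation {v | v.val.hi ≤ m} {v | m ≤ v.val.lo} where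
  mem_or_mem v := by
    change _ ≤ m ∨ m ≤ _
    rcases v.cases with ⟨j, k, hv⟩ | ⟨i, hv⟩ <;> simp only [hv, CWVert.lo_cwU, CWVert.hi_cwU,
      CWVert.lo_cwZ, CWVert.hi_cwZ] <;> omega
  adj x y h := by
    change (condensedWall r).Adj x.val y.val at h
    rw [condensedWall, SimpleGraph.fromRel_adj] at h
    change (x.val.hi ≤ m ∧ y.val.hi ≤ m) ∨ (m ≤ x.val.lo ∧ m ≤ y.val.lo)
    rcases x.cases with ⟨j, k, hx⟩ | ⟨i, hx⟩ <;> rcases y.cases with ⟨j', k', hy⟩ | ⟨i', hy⟩ <;>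
      rw [hx, hy] at h ⊢ <;> simp only [CWVert.lo_cwU, CWVert.hi_cwU,
      CWVert.lo_cwZ, CWVert.hi_cwZ] <;> simp only [cwU, cwZ, or_false, false_or] at h <;> omega

theorem exists_eq_cwZ_of_hi_le_of_le_lo {m : ℕ} {v : WMVert r} (h₁ : v.val.hi ≤ m)
    (h₂ : m ≤ v.val.lo) : ∃ i : Fin (r + 1), v.val = cwZ i ∧ (i : ℕ) = m := by
  rcases v.cases with ⟨j, k, hv⟩ | ⟨i, hv⟩ <;> rw [hv] at h₁ h₂
  · simp only [CWVert.lo_cwU, CWVert.hi_cwU] at h₁ h₂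
    omega
  · exact ⟨i, hv, le_antisymm h₁ h₂⟩

theorem levelCut_inter_subsingleton (m : ℕ) :
    ({v | v.val.hi ≤ m} ∩ {v | m ≤ v.val.lo} : Set (WMVert r)).Subsingleton := by
  rintro v ⟨hv₁, hv₂⟩ w ⟨hw₁, hw₂⟩
  obtain ⟨i, hv, hi⟩ := exists_eq_cwZ_of_hi_le_of_le_lo hv₁ hv₂
  obtain ⟨i', hw, hi'⟩ := exists_eq_cwZ_of_hi_le_of_le_lo hw₁ hw₂
  exact Subtype.ext (by rw [hv, hw, Fin.ext (hi.trans hi'.symm)])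

/-- The separator contains everything off the path `u^j_·`, but only `u^j_g` on it. -/
theorem isSeparation_pathCut (j : Fin r) (g : ℕ) :
    (wallMinusAB r).IsSeparation {v | ∀ k, v.val = cwU j k → (k : ℕ) ≤ g}
      {v | ∀ k, v.val = cwU j k → g ≤ (k : ℕ)} where
  mem_or_mem v := by
    change (∀ k, v.val = cwU j k → _) ∨ (∀ k, v.val = cwU j k → _)
    rcases v.cases with ⟨j', k', hv⟩ | ⟨i, hv⟩
    · simp [hv]
      omega
    · simp [hv]
  adj x y h := by
    change (condensedWall r).Adj x.val y.val at h
    rw [condensedWall, SimpleGraph.fromRel_adj] at h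
    change ((∀ k, x.val = cwU j k → _) ∧ (∀ k, y.val = cwU j k → _)) ∨
      ((∀ k, x.val = cwU j k → _) ∧ (∀ k, y.val = cwU j k → _))
    rcases x.cases with ⟨j₁, k₁, hx⟩ | ⟨i, hx⟩ <;> rcases y.cases with ⟨j₂, k₂, hy⟩ | ⟨i', hy⟩ <;>
      rw [hx, hy] at h ⊢ <;> simp <;> simp [cwU, cwZ] at h <;> omega

theorem mem_layerVerts_iff (v : WMVert r) (j : Fin r) :
    v.val ∈ layerVerts r j ↔ j ≤ v.val.lo ∧ v.val.hi ≤ j + 1 := by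
  rcases v.cases with ⟨j', k, hv⟩ | ⟨i, hv⟩ <;> simp [hv, layerVerts, Fin.ext_iff] <;> omega

theorem eq_of_mem_layerVerts {j j' : Fin r} {v w : WMVert r} (hvw : v ≠ w)
    (hv : v.val ∈ layerVerts r j) (hv' : v.val ∈ layerVerts r j')
    (hw : w.val ∈ layerVerts r j) (hw' : w.val ∈ layerVerts r j') : j = j' := by
  rw [mem_layerVerts_iff] at hv hv' hw hw'
  by_contra hjj
  have hjj : (j : ℕ) ≠ j' := fun h => hjj (Fin.ext h)
  have hcut : ∀ x : WMVert r, j ≤ x.val.lo ∧ x.val.hi ≤ j + 1 → j' ≤ x.val.lo ∧ x.val.hi ≤ j' + 1 →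
      x ∈ {x : WMVert r | x.val.hi ≤ max (j : ℕ) j'} ∩ {x | max (j : ℕ) j' ≤ x.val.lo} :=
    fun x h h' => ⟨show x.val.hi ≤ max (j : ℕ) j' by omega, show max (j : ℕ) j' ≤ x.val.lo by omega⟩
  exact hvw (levelCut_inter_subsingleton _ (hcut v hv hv') (hcut w hw hw'))

theorem eq_or_eq_or_eq_of_isBottleneck {j : Fin r} {u v w : WMVert r}
    (hu : IsBottleneck u.val) (hv : IsBottleneck v.val) (hw : IsBottleneck w.val)
    (hu' : u.val ∈ layerVerts r j) (hv' : v.val ∈ layerVerts r j)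
    (hw' : w.val ∈ layerVerts r j) : u = v ∨ u = w ∨ v = w := by
  have key : ∀ x : WMVert r, IsBottleneck x.val → x.val ∈ layerVerts r j →
      x.val = cwZ j.castSucc ∨ x.val = cwZ j.succ := by
    rintro x ⟨i, hi⟩ (⟨k, hk⟩ | h | h)
    exacts [absurd (hi.symm.trans hk) (CWVert.cwZ_ne_cwU _ _ _), .inl h, .inr h]
  rcases key u hu hu' with h₁ | h₁ <;> rcases key v hv hv' with h₂ | h₂ <;>
    rcases key w hw hw' with h₃ | h₃
  all_goals first
    | exact .inl (Subtype.ext (h₁.trans h₂.symm))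
    | exact .inr (.inl (Subtype.ext (h₁.trans h₃.symm)))
    | exact .inr (.inr (Subtype.ext (h₂.trans h₃.symm)))

theorem exists_isBottleneck_mem_support {j : Fin r} {c v : WMVert r}
    (P : (wallMinusAB r).Walk c v) (hc : c.val ∈ layerVerts r j)
    (hbot : IsBottleneck c.val ∨ IsBottleneck v.val) :
    ∃ w ∈ P.support, IsBottleneck w.val ∧ w.val ∈ layerVerts r j := by
  rw [mem_layerVerts_iff] at hc
  have hcut : ∀ (w : WMVert r) (m : ℕ), w.val.hi ≤ m → m ≤ w.val.lo → (j : ℕ) ≤ m →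
      m ≤ j + 1 → IsBottleneck w.val ∧ w.val ∈ layerVerts r j := fun w m h₁ h₂ h₃ h₄ =>
    let ⟨i, hi, _⟩ := exists_eq_cwZ_of_hi_le_of_le_lo h₁ h₂
    ⟨⟨i, hi⟩, (mem_layerVerts_iff w j).2 ⟨by omega, by omega⟩⟩
  rcases hbot with hbot | ⟨i, hi⟩
  · exact ⟨c, P.start_mem_support, hbot, (mem_layerVerts_iff c j).2 hc⟩
  have hv : v.val.lo = i ∧ v.val.hi = i := by simp [hi]
  by_cases hij : (i : ℕ) ≤ j + 1
  · by_cases hji : (j : ℕ) ≤ i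
    · exact ⟨v, P.end_mem_support, hcut v i (by omega) (by omega) hji hij⟩
    · obtain ⟨w, hw, hwB, hwA⟩ := P.exists_mem_inter_of_separation
        (isSeparation_levelCut j).symm.adj hc.1 (show ¬ (j : ℕ) ≤ v.val.lo by omega)
      exact ⟨w, hw, hcut w j hwA hwB le_rfl (by omega)⟩
  · obtain ⟨w, hw, hwA, hwB⟩ := P.exists_mem_inter_of_separation
      (isSeparation_levelCut (j + 1)).adj hc.2 (show ¬ v.val.hi ≤ j + 1 by omega)
    exact ⟨w, hw, hcut w (j + 1) hwA hwB (by omega) le_rfl⟩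

end WMVert

namespace SubdivCopy

variable {r : ℕ}

theorem exists_layerVerts (S : SubdivCopy (elemLadder 2) (wallMinusAB r)) :
    ∃ j : Fin r, S.verts ⊆ {v | v.val ∈ layerVerts r j} := by
  classical
  have hex : ∃ m, ∃ v ∈ S.verts, v.val.lo = m := ⟨_, _, S.branch_mem_verts (0, false), rfl⟩
  obtain ⟨v₀, hv₀, hv₀m⟩ := Nat.find_spec hex
  set m := Nat.find hex
  have hlo : ∀ v ∈ S.verts, m ≤ v.val.lo := fun v hv => Nat.find_min' hex ⟨v, hv, rfl⟩
  have hhi : ∀ v ∈ S.verts, v.val.hi ≤ m + 1 := by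
    rcases S.verts_subset_or_subset (WMVert.isSeparation_levelCut (m + 1))
      ((WMVert.levelCut_inter_subsingleton _).anti Set.inter_subset_left) with h | h
    · exact h
    · exact absurd (h hv₀) (by simp [hv₀m])
  -- at a level `m ≥ r` only `z_r` is left
  have hm : m < r := by
    by_contra! hm
    have hcut : ∀ v ∈ S.verts, v ∈ {v : WMVert r | v.val.hi ≤ m} ∩ {v | m ≤ v.val.lo} :=
      fun v hv => ⟨(WMVert.hi_le v).trans hm, hlo v hv⟩
    have := WMVert.levelCut_inter_subsingleton m (hcut _ (S.branch_mem_verts (0, false)))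
      (hcut _ (S.branch_mem_verts (0, true)))
    exact absurd (S.branch_inj this) (by decide)
  exact ⟨⟨m, hm⟩, fun v hv => (WMVert.mem_layerVerts_iff v _).2 ⟨hlo v hv, hhi v hv⟩⟩

/-- Otherwise the square lies on the path of its layer, and cutting that path at the middle one
of three corners separates the other two. -/
theorem exists_isBottleneck (S : SubdivCopy (elemLadder 2) (wallMinusAB r)) :
    ∃ v ∈ S.verts, IsBottleneck v.val := by
  by_contra! hno
  obtain ⟨j, hj⟩ := S.exists_layerVerts
  have hpos : ∀ v ∈ S.verts, ∃ k, v.val = cwU j k := fun v hv =>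
    (hj hv).resolve_right fun h => hno v hv (h.elim (⟨_, ·⟩) (⟨_, ·⟩))
  have hside : ∀ g : ℕ, (∀ c k, (S.branch c).val = cwU j k → (k : ℕ) ≤ g) ∨
      (∀ c k, (S.branch c).val = cwU j k → g ≤ (k : ℕ)) := by
    intro g
    refine (S.verts_subset_or_subset (WMVert.isSeparation_pathCut j g) ?_).imp
      (fun h c => h (S.branch_mem_verts c)) (fun h c => h (S.branch_mem_verts c))
    rintro v ⟨⟨hv₁, hv₂⟩, hv⟩ w ⟨⟨hw₁, hw₂⟩, hw⟩
    obtain ⟨k, hk⟩ := hpos v hv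
    obtain ⟨k', hk'⟩ := hpos w hw
    have := hv₁ k hk; have := hv₂ k hk; have := hw₁ k' hk'; have := hw₂ k' hk'
    exact Subtype.ext (by rw [hk, hk', CWVert.cwU_inj]; exact ⟨rfl, Fin.ext (by omega)⟩)
  have hcorner : ∀ c, ∃ k, (S.branch c).val = cwU j k := fun c => hpos _ (S.branch_mem_verts c)
  obtain ⟨k₀, hk₀⟩ := hcorner (0, false)
  obtain ⟨k₁, hk₁⟩ := hcorner (0, true)
  obtain ⟨k₂, hk₂⟩ := hcorner (1, false)
  have hne : ∀ {c c' k k'}, c ≠ c' → (S.branch c).val = cwU j k →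
      (S.branch c').val = cwU j k' → (k : ℕ) ≠ k' := fun hcc' hk hk' hkk' =>
    hcc' (S.branch_inj (Subtype.ext (by rw [hk, hk', Fin.ext hkk'])))
  have h₀₁ := hne (by decide) hk₀ hk₁
  have h₀₂ := hne (by decide) hk₀ hk₂
  have h₁₂ := hne (by decide) hk₁ hk₂
  have hg : ∀ g : ℕ, ((k₀ : ℕ) ≤ g ∧ (k₁ : ℕ) ≤ g ∧ (k₂ : ℕ) ≤ g) ∨
      (g ≤ (k₀ : ℕ) ∧ g ≤ (k₁ : ℕ) ∧ g ≤ (k₂ : ℕ)) := fun g =>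
    (hside g).imp (fun h => ⟨h _ _ hk₀, h _ _ hk₁, h _ _ hk₂⟩)
      (fun h => ⟨h _ _ hk₀, h _ _ hk₁, h _ _ hk₂⟩)
  have := hg k₀; have := hg k₁; have := hg k₂
  omega

theorem exists_layerVerts_of_ladder {n : ℕ} (L : SubdivCopy (elemLadder n) (wallMinusAB r))
    (hn : 1 < n) :
    ∃ j : Fin r, ∀ a (ha : a + 1 < n), (L.square a ha).verts ⊆ {v | v.val ∈ layerVerts r j} := by
  obtain ⟨j, hj⟩ := (L.square 0 hn).exists_layerVerts
  refine ⟨j, fun a => ?_⟩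
  induction a with
  | zero => exact fun _ => hj
  | succ a ih =>
    intro ha
    obtain ⟨j', hj'⟩ := (L.square (a + 1) ha).exists_layerVerts
    have hrung : ∀ s, L.branch (⟨a + 1, by omega⟩, s) ∈ (L.square a (by omega)).verts ∧
        L.branch (⟨a + 1, by omega⟩, s) ∈ (L.square (a + 1) ha).verts := fun s =>
      ⟨L.branch_mem_square_verts _ (.inr rfl), L.branch_mem_square_verts _ (.inl rfl)⟩
    obtain rfl : j' = j := WMVert.eq_of_mem_layerVerts
      (fun h => absurd (L.branch_inj h) (by simp))
      (hj' (hrung false).2) (ih _ (hrung false).1) (hj' (hrung true).2) (ih _ (hrung true).1)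
    exact hj'

end SubdivCopy

theorem not_exists_ladder5_bottleneck_path (r : ℕ) :
    ¬ ∃ (L : SubdivCopy (elemLadder 5) (wallMinusAB r)) (i : Fin 5) (s : Bool)
        (v₂ : WMVert r) (P : (wallMinusAB r).Walk (L.branch (i, s)) v₂),
        ((i : ℕ) = 0 ∨ (i : ℕ) = 4) ∧ P.IsPath ∧
        (∀ x, x ∈ P.support → x ∈ L.verts → x = L.branch (i, s)) ∧
        (IsBottleneck (L.branch (i, s)).val ∨ IsBottleneck v₂.val) := by
  rintro ⟨L, i, s, v₂, P, hi, -, hPL, hbot⟩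
  obtain ⟨l, hl⟩ := L.exists_layerVerts_of_ladder (by norm_num)
  obtain ⟨a, b, b', ha, hb, hb', hia, hib, hib', hbb'⟩ : ∃ a b b', a + 1 < 5 ∧ b + 1 < 5 ∧
      b' + 1 < 5 ∧ ((i : ℕ) = a ∨ (i : ℕ) = a + 1) ∧ ((i : ℕ) ≠ b ∧ (i : ℕ) ≠ b + 1) ∧
      ((i : ℕ) ≠ b' ∧ (i : ℕ) ≠ b' + 1) ∧ b + 1 < b' := by
    rcases hi with hi | hi
    exacts [⟨0, 1, 3, by omega⟩, ⟨3, 0, 2, by omega⟩]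
  obtain ⟨w, hwP, hw, hwl⟩ := WMVert.exists_isBottleneck_mem_support P
    (hl a ha (L.branch_mem_square_verts ha hia)) hbot
  obtain ⟨w₁, hw₁, hw₁b⟩ := (L.square b hb).exists_isBottleneck
  obtain ⟨w₂, hw₂, hw₂b⟩ := (L.square b' hb').exists_isBottleneck
  rcases WMVert.eq_or_eq_or_eq_of_isBottleneck hw hw₁b hw₂b hwl (hl b hb hw₁) (hl b' hb' hw₂)
    with rfl | rfl | rfl
  · exact L.notMem_square_verts hb hib (hPL w hwP) hw₁
  · exact L.notMem_square_verts hb' hib' (hPL w hwP) hw₂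
  · exact Set.disjoint_left.mp (L.disjoint_square_verts hb hb' hbb') hw₁ hw₂

theorem not_exists_ladder4_bottleneck_paths (r : ℕ) :
    ¬ ∃ (L : SubdivCopy (elemLadder 4) (wallMinusAB r)) (i j : Fin 4) (s : Bool)
        (v₂ v₄ : WMVert r) (P : (wallMinusAB r).Walk (L.branch (i, s)) v₂)
        (P' : (wallMinusAB r).Walk (L.branch (j, !s)) v₄),
        (((i : ℕ) = 0 ∧ (j : ℕ) = 3) ∨ ((i : ℕ) = 3 ∧ (j : ℕ) = 0)) ∧
        P.IsPath ∧ P'.IsPath ∧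
        (∀ x, x ∈ P.support → x ∈ L.verts → x = L.branch (i, s)) ∧
        (∀ x, x ∈ P'.support → x ∈ L.verts → x = L.branch (j, !s)) ∧
        (∀ x, x ∈ P.support → x ∉ P'.support) ∧
        (IsBottleneck (L.branch (i, s)).val ∨ IsBottleneck v₂.val) ∧
        (IsBottleneck (L.branch (j, !s)).val ∨ IsBottleneck v₄.val) := by
  rintro ⟨L, i, j, s, v₂, v₄, P, P', hij, -, -, hPL, hP'L, hPP', hbot, hbot'⟩
  obtain ⟨l, hl⟩ := L.exists_layerVerts_of_ladder (by norm_num)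
  obtain ⟨a, a', ha, ha', hia, hja'⟩ : ∃ a a', a + 1 < 4 ∧ a' + 1 < 4 ∧
      ((i : ℕ) = a ∨ (i : ℕ) = a + 1) ∧ ((j : ℕ) = a' ∨ (j : ℕ) = a' + 1) := by
    rcases hij with hij | hij
    exacts [⟨0, 2, by omega⟩, ⟨2, 0, by omega⟩]
  obtain ⟨w, hwP, hw, hwl⟩ := WMVert.exists_isBottleneck_mem_support P
    (hl a ha (L.branch_mem_square_verts ha hia)) hbot
  obtain ⟨w', hw'P', hw', hw'l⟩ := WMVert.exists_isBottleneck_mem_support P'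
    (hl a' ha' (L.branch_mem_square_verts ha' hja')) hbot'
  obtain ⟨w₁, hw₁, hw₁b⟩ := (L.square 1 (by norm_num)).exists_isBottleneck
  rcases WMVert.eq_or_eq_or_eq_of_isBottleneck hw hw' hw₁b hwl hw'l (hl 1 _ hw₁)
    with rfl | rfl | rfl
  · exact hPP' w hwP hw'P'
  · exact L.notMem_square_verts _ (by dsimp only; omega) (hPL w hwP) hw₁
  · exact L.notMem_square_verts _ (by dsimp only; omega) (hP'L _ hw'P') hw₁

theorem not_exists_ladder3_bottleneck_paths (r : ℕ) :
    ¬ ∃ (L : SubdivCopy (elemLadder 3) (wallMinusAB r)) (i : Fin 3)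
        (v₂ v₄ : WMVert r) (P : (wallMinusAB r).Walk (L.branch (i, false)) v₂)
        (P' : (wallMinusAB r).Walk (L.branch (i, true)) v₄),
        ((i : ℕ) = 0 ∨ (i : ℕ) = 2) ∧ P.IsPath ∧ P'.IsPath ∧
        (∀ x, x ∈ P.support → x ∈ L.verts → x = L.branch (i, false)) ∧
        (∀ x, x ∈ P'.support → x ∈ L.verts → x = L.branch (i, true)) ∧
        (∀ x, x ∈ P.support → x ∉ P'.support) ∧
        (IsBottleneck (L.branch (i, false)).val ∨ IsBottleneck v₂.val) ∧
        (IsBottleneck (L.branch (i, true)).val ∨ IsBottleneck v₄.val) := by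
  rintro ⟨L, i, v₂, v₄, P, P', hi, -, -, hPL, hP'L, hPP', hbot, hbot'⟩
  obtain ⟨l, hl⟩ := L.exists_layerVerts_of_ladder (by norm_num)
  obtain ⟨a, b, ha, hb, hia, hib⟩ : ∃ a b, a + 1 < 3 ∧ b + 1 < 3 ∧
      ((i : ℕ) = a ∨ (i : ℕ) = a + 1) ∧ ((i : ℕ) ≠ b ∧ (i : ℕ) ≠ b + 1) := by
    rcases hi with hi | hi
    exacts [⟨0, 1, by omega⟩, ⟨1, 0, by omega⟩]
  obtain ⟨w, hwP, hw, hwl⟩ := WMVert.exists_isBottleneck_mem_support P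
    (hl a ha (L.branch_mem_square_verts ha hia)) hbot
  obtain ⟨w', hw'P', hw', hw'l⟩ := WMVert.exists_isBottleneck_mem_support P'
    (hl a ha (L.branch_mem_square_verts ha hia)) hbot'
  obtain ⟨w₁, hw₁, hw₁b⟩ := (L.square b hb).exists_isBottleneck
  rcases WMVert.eq_or_eq_or_eq_of_isBottleneck hw hw' hw₁b hwl hw'l (hl b hb hw₁)
    with rfl | rfl | rfl
  · exact hPP' w hwP hw'P'
  · exact L.notMem_square_verts hb hib (hPL w hwP) hw₁
  · exact L.notMem_square_verts hb hib (hP'L _ hw'P') hw₁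

/-- In `W − {a, b}` none of the following exists: (1) a ladder with 5 rungs together
with a path, internally disjoint from it, from a corner `v₁` of an end-rung to a vertex
`v₂` with `v₁` or `v₂` a bottleneck vertex; (2) a ladder with 4 rungs together with two
disjoint such paths attached at diagonally opposite corners `v₁`, `v₃` of the two
end-rungs, going to `v₂` and `v₄`, with one of `v₁, v₂` and one of `v₃, v₄` bottleneck
vertices; (3) a ladder with 3 rungs together with two disjoint such paths attached at
the two corners `v₁, v₃` of the same end-rung, going to `v₂` and `v₄`, with one of
`v₁, v₂` and one of `v₃, v₄` bottleneck vertices. -/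
theorem no_bottleneck_ladder_configs (r : ℕ) :
    (¬ ∃ (L : SubdivCopy (elemLadder 5) (wallMinusAB r)) (i : Fin 5) (s : Bool)
        (v₂ : WMVert r) (P : (wallMinusAB r).Walk (L.branch (i, s)) v₂),
        ((i : ℕ) = 0 ∨ (i : ℕ) = 4) ∧ P.IsPath ∧
        (∀ x, x ∈ P.support → x ∈ L.verts → x = L.branch (i, s)) ∧
        (IsBottleneck (L.branch (i, s)).val ∨ IsBottleneck v₂.val)) ∧
    (¬ ∃ (L : SubdivCopy (elemLadder 4) (wallMinusAB r)) (i j : Fin 4) (s : Bool)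
        (v₂ v₄ : WMVert r) (P : (wallMinusAB r).Walk (L.branch (i, s)) v₂)
        (P' : (wallMinusAB r).Walk (L.branch (j, !s)) v₄),
        (((i : ℕ) = 0 ∧ (j : ℕ) = 3) ∨ ((i : ℕ) = 3 ∧ (j : ℕ) = 0)) ∧
        P.IsPath ∧ P'.IsPath ∧
        (∀ x, x ∈ P.support → x ∈ L.verts → x = L.branch (i, s)) ∧
        (∀ x, x ∈ P'.support → x ∈ L.verts → x = L.branch (j, !s)) ∧
        (∀ x, x ∈ P.support → x ∉ P'.support) ∧
        (IsBottleneck (L.branch (i, s)).val ∨ IsBottleneck v₂.val) ∧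
        (IsBottleneck (L.branch (j, !s)).val ∨ IsBottleneck v₄.val)) ∧
    (¬ ∃ (L : SubdivCopy (elemLadder 3) (wallMinusAB r)) (i : Fin 3)
        (v₂ v₄ : WMVert r) (P : (wallMinusAB r).Walk (L.branch (i, false)) v₂)
        (P' : (wallMinusAB r).Walk (L.branch (i, true)) v₄),
        ((i : ℕ) = 0 ∨ (i : ℕ) = 2) ∧ P.IsPath ∧ P'.IsPath ∧
        (∀ x, x ∈ P.support → x ∈ L.verts → x = L.branch (i, false)) ∧
        (∀ x, x ∈ P'.support → x ∈ L.verts → x = L.branch (i, true)) ∧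
        (∀ x, x ∈ P.support → x ∉ P'.support) ∧
        (IsBottleneck (L.branch (i, false)).val ∨ IsBottleneck v₂.val) ∧
        (IsBottleneck (L.branch (i, true)).val ∨ IsBottleneck v₄.val)) :=
  ⟨not_exists_ladder5_bottleneck_path r, not_exists_ladder4_bottleneck_paths r,
    not_exists_ladder3_bottleneck_paths r⟩
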